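/- arXiv:1506.04455 — 2 statements merged into one kernel-verified Lean document; each statement's English description precedes it below -/
import Mathlib

section
/- Let p be a nonzero Laurent polynomial in two variables over ℤ. Suppose there are integers m and n with coeff p (i, j) = coeff p (m − i, n − j) for all (i, j) ∈ ℤ × ℤ, and suppose in addition that there exist an integer ω ≥ 1, an integer c, a sign ε ∈ {1, −1}, and a nonzero one-variable Laurent polynomial g over ℤ of even breadth, such that p(1, y) = ε · y^c · (1 + y + ⋯ + y^{ω−1}) · g(y). Then the y-breadth of p is congruent to ω − 1 modulo 2. (This is the algebraic content of Lemma 2.2: for an oriented two-component link L₁ ∪ L₂ in a homology sphere with linking number ω ≥ 1, the Torres conditions (T1) and (T2) provide exactly these hypotheses for p = Δ_{L₁∪L₂} with g = Δ_{L₂}, whose breadth is even since L₂ is a knot; the conclusion is br_y(Δ_{L₁∪L₂}) ≡ ω − 1 (mod 2).) -/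
/-- The maximum `y`-exponent appearing in a two-variable Laurent polynomial
(junk value `0` for the zero polynomial). -/
noncomputable def ymax (p : AddMonoidAlgebra ℤ (ℤ × ℤ)) : ℤ :=
  WithBot.unbotD 0 ((p.coeff.support.image Prod.snd).max)

/-- The minimum `y`-exponent appearing in a two-variable Laurent polynomial
(junk value `0` for the zero polynomial). -/
noncomputable def ymin (p : AddMonoidAlgebra ℤ (ℤ × ℤ)) : ℤ :=
  WithTop.untopD 0 ((p.coeff.support.image Prod.snd).min)

/-- The `y`-breadth of a two-variable Laurent polynomial. -/
noncomputable def ybreadth (p : AddMonoidAlgebra ℤ (ℤ × ℤ)) : ℤ := ymax p - ymin p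

/-- The breadth of a one-variable Laurent polynomial:
maximum degree minus minimum degree of its support. -/
noncomputable def breadth (q : AddMonoidAlgebra ℤ ℤ) : ℤ :=
  WithBot.unbotD 0 (q.coeff.support.max) - WithTop.untopD 0 (q.coeff.support.min)

/-- The specialization `p(1, y)`: the one-variable Laurent polynomial whose coefficient
of `y^j` is `Σ_i coeff p (i, j)`. -/
noncomputable def specOne (p : AddMonoidAlgebra ℤ (ℤ × ℤ)) : AddMonoidAlgebra ℤ ℤ :=
  AddMonoidAlgebra.ofCoeff (Finsupp.mapDomain Prod.snd p.coeff)

/-!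
The symmetry `(i, j) ↦ (m − i, n − j)` makes the `y`-support of `p`, and also the support of
`p(1, y)`, symmetric under `j ↦ n − j`. A finite set of integers symmetric about `n` has
`max + min = n`, so its breadth is `≡ n (mod 2)`; hence `br_y(p) ≡ n ≡ br(p(1, y)) (mod 2)`.
Breadth is additive under multiplication over a domain, so
`br(p(1, y)) = (ω − 1) + br(g) ≡ ω − 1 (mod 2)`.
-/

theorem Finset.max_eq_of_isGreatest {α : Type*} [LinearOrder α] {s : Finset α} {a : α}
    (h : IsGreatest (s : Set α) a) : s.max = a :=
  le_antisymm (Finset.max_le fun _ hx => WithBot.coe_le_coe.2 (h.2 hx)) (Finset.le_max h.1)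

theorem Finset.min_eq_of_isLeast {α : Type*} [LinearOrder α] {s : Finset α} {a : α}
    (h : IsLeast (s : Set α) a) : s.min = a :=
  le_antisymm (Finset.min_le h.1) (Finset.le_min fun _ hx => WithTop.coe_le_coe.2 (h.2 hx))

theorem add_eq_of_isGreatest_of_isLeast {α : Type*} [AddCommGroup α] [PartialOrder α]
    [IsOrderedAddMonoid α] {s : Set α} {n a b : α} (hs : ∀ j ∈ s, n - j ∈ s)
    (ha : IsGreatest s a) (hb : IsLeast s b) : a + b = n :=
  le_antisymm (le_sub_iff_add_le'.1 (hb.2 (hs a ha.1))) (sub_le_iff_le_add.1 (ha.2 (hs b hb.1)))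

theorem Finset.max_sub_min_modEq_two_of_symm {s : Finset ℤ} {n : ℤ} (hne : s.Nonempty)
    (hs : ∀ j ∈ s, n - j ∈ s) : s.max.unbotD 0 - s.min.untopD 0 ≡ n [ZMOD 2] := by
  have hsum := add_eq_of_isGreatest_of_isLeast hs (s.isGreatest_max' hne) (s.isLeast_min' hne)
  rw [Finset.max_eq_of_isGreatest (s.isGreatest_max' hne),
    Finset.min_eq_of_isLeast (s.isLeast_min' hne), WithBot.unbotD_coe, WithTop.untopD_coe,
    Int.ModEq]
  omega

namespace AddMonoidAlgebra

section ExtremalExponents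

variable {R A : Type*} [Semiring R] [NoZeroDivisors R]
  [AddCommMonoid A] [LinearOrder A] [IsOrderedCancelAddMonoid A] {f g : R[A]} {a b : A}

theorem isGreatest_support_mul (ha : IsGreatest (f.coeff.support : Set A) a)
    (hb : IsGreatest (g.coeff.support : Set A) b) :
    IsGreatest ((f * g).coeff.support : Set A) (a + b) := by
  classical
  refine ⟨?_, fun c hc => ?_⟩
  · have hunique : UniqueAdd f.coeff.support g.coeff.support a b := fun x y hx hy hxy =>
      (add_eq_add_iff_eq_and_eq (ha.2 hx) (hb.2 hy)).1 hxy
    rw [Finset.mem_coe, Finsupp.mem_support_iff, coeff_mul_add_of_uniqueAdd hunique]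
    exact mul_ne_zero (Finsupp.mem_support_iff.1 ha.1) (Finsupp.mem_support_iff.1 hb.1)
  · obtain ⟨x, hx, y, hy, rfl⟩ := Finset.mem_add.1 (support_coeff_mul_subset f g hc)
    exact add_le_add (ha.2 hx) (hb.2 hy)

theorem isLeast_support_mul (ha : IsLeast (f.coeff.support : Set A) a)
    (hb : IsLeast (g.coeff.support : Set A) b) :
    IsLeast ((f * g).coeff.support : Set A) (a + b) := by
  classical
  refine ⟨?_, fun c hc => ?_⟩
  · have hunique : UniqueAdd f.coeff.support g.coeff.support a b := fun x y hx hy hxy =>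
      ((add_eq_add_iff_eq_and_eq (ha.2 hx) (hb.2 hy)).1 hxy.symm).imp Eq.symm Eq.symm
    rw [Finset.mem_coe, Finsupp.mem_support_iff, coeff_mul_add_of_uniqueAdd hunique]
    exact mul_ne_zero (Finsupp.mem_support_iff.1 ha.1) (Finsupp.mem_support_iff.1 hb.1)
  · obtain ⟨x, hx, y, hy, rfl⟩ := Finset.mem_add.1 (support_coeff_mul_subset f g hc)
    exact add_le_add (ha.2 hx) (hb.2 hy)

end ExtremalExponents

theorem support_nonempty_of_ne_zero {R A : Type*} [Semiring R] {f : R[A]} (hf : f ≠ 0) :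
    f.coeff.support.Nonempty :=
  Finsupp.support_nonempty_iff.2 (coeff_eq_zero.not.2 hf)

theorem mem_support_sum_range_single_one {R : Type*} [Semiring R] [Nontrivial R] {N : ℕ}
    {j : ℤ} :
    j ∈ (∑ k ∈ Finset.range N, single (k : ℤ) (1 : R)).coeff.support ↔ 0 ≤ j ∧ j < N := by
  classical
  simp only [Finsupp.mem_support_iff, coeff_sum, Finsupp.finsetSum_apply, coeff_single,
    Finsupp.single_apply]
  rcases lt_or_ge j 0 with hj | hj
  · rw [Finset.sum_eq_zero fun (x : ℕ) _ => if_neg (by omega : (x : ℤ) ≠ j)]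
    exact iff_of_false (not_not.2 rfl) (by omega)
  · lift j to ℕ using hj
    simp [Finset.sum_ite_eq']

theorem sum_range_single_one_ne_zero {R : Type*} [Semiring R] [Nontrivial R] {N : ℕ}
    (hN : 0 < N) : ∑ k ∈ Finset.range N, single (k : ℤ) (1 : R) ≠ 0 := fun h => by
  have h0 := (mem_support_sum_range_single_one (R := R) (j := 0)).2
    ⟨le_rfl, by exact_mod_cast hN⟩
  rw [h, coeff_zero, Finsupp.support_zero] at h0
  exact Finset.notMem_empty _ h0

end AddMonoidAlgebra

open AddMonoidAlgebra

theorem breadth_eq_of_isGreatest_of_isLeast {q : AddMonoidAlgebra ℤ ℤ} {a b : ℤ}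
    (ha : IsGreatest (q.coeff.support : Set ℤ) a) (hb : IsLeast (q.coeff.support : Set ℤ) b) :
    breadth q = a - b := by
  rw [breadth, Finset.max_eq_of_isGreatest ha, Finset.min_eq_of_isLeast hb, WithBot.unbotD_coe,
    WithTop.untopD_coe]

theorem breadth_mul {f g : AddMonoidAlgebra ℤ ℤ} (hf : f ≠ 0) (hg : g ≠ 0) :
    breadth (f * g) = breadth f + breadth g := by
  have hf' := support_nonempty_of_ne_zero hf
  have hg' := support_nonempty_of_ne_zero hg
  have hf_max := Finset.isGreatest_max' _ hf'
  have hf_min := Finset.isLeast_min' _ hf'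
  have hg_max := Finset.isGreatest_max' _ hg'
  have hg_min := Finset.isLeast_min' _ hg'
  rw [breadth_eq_of_isGreatest_of_isLeast hf_max hf_min,
    breadth_eq_of_isGreatest_of_isLeast hg_max hg_min,
    breadth_eq_of_isGreatest_of_isLeast (isGreatest_support_mul hf_max hg_max)
      (isLeast_support_mul hf_min hg_min)]
  ring

theorem breadth_smul {ε : ℤ} (hε : ε ≠ 0) (q : AddMonoidAlgebra ℤ ℤ) :
    breadth (ε • q) = breadth q := by
  rw [breadth, breadth, coeff_smul, Finsupp.support_smul_eq hε]

theorem breadth_single {r : ℤ} (hr : r ≠ 0) (c : ℤ) : breadth (single c r) = 0 := by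
  rw [breadth, coeff_single, Finsupp.support_single c hr, Finset.max_singleton,
    Finset.min_singleton, WithBot.unbotD_coe, WithTop.untopD_coe, sub_self]

theorem breadth_sum_range_single_one {N : ℕ} (hN : 0 < N) :
    breadth (∑ k ∈ Finset.range N, single (k : ℤ) (1 : ℤ)) = N - 1 := by
  rw [breadth_eq_of_isGreatest_of_isLeast (a := N - 1) (b := 0)]
  · ring
  · exact ⟨mem_support_sum_range_single_one.2 (by omega),
      fun x hx => by have := mem_support_sum_range_single_one.1 hx; omega⟩
  · exact ⟨mem_support_sum_range_single_one.2 (by omega),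
      fun x hx => (mem_support_sum_range_single_one.1 hx).1⟩

section Symmetry

variable {p : AddMonoidAlgebra ℤ (ℤ × ℤ)} {m n : ℤ}

theorem coeff_specOne_sub (hsym : ∀ i j : ℤ, p.coeff (i, j) = p.coeff (m - i, n - j)) (j : ℤ) :
    (specOne p).coeff (n - j) = (specOne p).coeff j := by
  have hp : Finsupp.equivMapDomain (Equiv.subLeft (m, n)) p.coeff = p.coeff := by
    ext ⟨i, j⟩
    simp [hsym i j, neg_add_eq_sub]
  -- `Prod.snd` carries the reflection of `ℤ × ℤ` about `(m, n)` to the reflection of `ℤ` about `n`.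
  have hq : Finsupp.equivMapDomain (Equiv.subLeft n) (specOne p).coeff = (specOne p).coeff := by
    conv_rhs => rw [specOne, coeff_ofCoeff, ← hp]
    simp only [specOne, coeff_ofCoeff, Finsupp.equivMapDomain_eq_mapDomain,
      ← Finsupp.mapDomain_comp]
    rfl
  simpa using (DFunLike.congr_fun hq (n - j)).symm

theorem breadth_specOne_modEq_two (hsym : ∀ i j : ℤ, p.coeff (i, j) = p.coeff (m - i, n - j))
    (hp : specOne p ≠ 0) : breadth (specOne p) ≡ n [ZMOD 2] :=
  Finset.max_sub_min_modEq_two_of_symm (support_nonempty_of_ne_zero hp) fun j hj => by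
    rwa [Finsupp.mem_support_iff, coeff_specOne_sub hsym, ← Finsupp.mem_support_iff]

theorem ybreadth_modEq_two (hsym : ∀ i j : ℤ, p.coeff (i, j) = p.coeff (m - i, n - j))
    (hp : p ≠ 0) : ybreadth p ≡ n [ZMOD 2] := by
  refine Finset.max_sub_min_modEq_two_of_symm ((support_nonempty_of_ne_zero hp).image _) ?_
  intro _ hj
  obtain ⟨⟨i, j⟩, hij, rfl⟩ := Finset.mem_image.1 hj
  refine Finset.mem_image.2 ⟨(m - i, n - j), ?_, rfl⟩
  rw [Finsupp.mem_support_iff, ← hsym]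
  exact Finsupp.mem_support_iff.1 hij

end Symmetry

/-- Lemma 2.2 of the paper (arithmetic content): if a nonzero two-variable Laurent
polynomial `p` over `ℤ` satisfies the symmetry `coeff p (i, j) = coeff p (m − i, n − j)`
and its specialization `p(1, y)` factors as `ε · y^c · (1 + y + ⋯ + y^{ω−1}) · g(y)`
with `ω ≥ 1`, `ε = ±1` and `g` a nonzero one-variable Laurent polynomial of even
breadth, then the `y`-breadth of `p` is congruent to `ω − 1` modulo `2`. -/
theorem ybreadth_modtwo_eq_linking_sub_one (p : AddMonoidAlgebra ℤ (ℤ × ℤ)) (hp : p ≠ 0)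
    (m n : ℤ) (hsym : ∀ i j : ℤ, p.coeff (i, j) = p.coeff (m - i, n - j))
    (ω : ℤ) (hω : 1 ≤ ω) (c : ℤ) (ε : ℤ) (hε : ε = 1 ∨ ε = -1)
    (g : AddMonoidAlgebra ℤ ℤ) (hg : g ≠ 0) (hgbr : Even (breadth g))
    (hfac : specOne p =
      ε • (AddMonoidAlgebra.single c (1 : ℤ) *
        (∑ k ∈ Finset.range ω.toNat, AddMonoidAlgebra.single (k : ℤ) (1 : ℤ)) * g)) :
    ybreadth p ≡ ω - 1 [ZMOD 2] := by
  have hε0 : ε ≠ 0 := by rcases hε with rfl | rfl <;> decide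
  have hω' : (ω.toNat : ℤ) = ω := Int.toNat_of_nonneg (by omega)
  have hsingle : single c (1 : ℤ) ≠ 0 := fun h => one_ne_zero (single_eq_zero.1 h)
  have hgeom := sum_range_single_one_ne_zero (R := ℤ) (N := ω.toNat) (by omega)
  have hq : specOne p ≠ 0 := by
    rw [hfac]
    exact smul_ne_zero hε0 (mul_ne_zero (mul_ne_zero hsingle hgeom) hg)
  have hbq : breadth (specOne p) = ω - 1 + breadth g := by
    rw [hfac, breadth_smul hε0, breadth_mul (mul_ne_zero hsingle hgeom) hg,
      breadth_mul hsingle hgeom, breadth_single one_ne_zero,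
      breadth_sum_range_single_one (by omega), hω', zero_add]
  obtain ⟨k, hk⟩ := hgbr
  calc ybreadth p ≡ n [ZMOD 2] := ybreadth_modEq_two hsym hp
    _ ≡ breadth (specOne p) [ZMOD 2] := (breadth_specOne_modEq_two hsym hq).symm
    _ = ω - 1 + 2 * k := by rw [hbq, hk, two_mul]
    _ ≡ ω - 1 [ZMOD 2] := Int.add_mul_emod_self_left _ _ _
end

section
/- Let p be a nonzero Laurent polynomial in two variables over ℤ with y-breadth ℓ, and let ω ≥ 1 be an integer. Suppose there exist a real constant D and infinitely many positive integers n such that the specialization p(t, t^{−nω}) is nonzero with breadth at most n·ω² + D. Then ℓ ≤ ω. (This is the core inequality in the proof of Proposition 1.9 of the paper: if K_n are L-space knots in a twist family then 2g(K_n) − 1 ≤ r_n = r₀ + nω² bounds the breadth of Δ_{K∪c}(t, t^{−nω}), forcing the y-breadth of Δ_{K∪c} to be at most ω.) -/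
/-- For `c : ℤ`, the specialization `p(t, t^c)`: the image of `p` under the map sending
the monomial `x^i y^j` to `t^{i + c·j}`. -/
noncomputable def specPow (c : ℤ) (p : AddMonoidAlgebra ℤ (ℤ × ℤ)) : AddMonoidAlgebra ℤ ℤ :=
  AddMonoidAlgebra.ofCoeff (Finsupp.mapDomain (fun ij => ij.1 + c * ij.2) p.coeff)

def specExponent (c : ℤ) (ij : ℤ × ℤ) : ℤ := ij.1 + c * ij.2

lemma le_breadth_of_mem {q : AddMonoidAlgebra ℤ ℤ} {u v : ℤ} (hu : u ∈ q.coeff.support)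
    (hv : v ∈ q.coeff.support) : u - v ≤ breadth q := by
  have hne : q.coeff.support.Nonempty := ⟨u, hu⟩
  rw [breadth, ← Finset.coe_max' hne, ← Finset.coe_min' hne, WithBot.unbotD_coe,
    WithTop.untopD_coe]
  have := Finset.le_max' _ _ hu
  have := Finset.min'_le _ _ hv
  omega

lemma abs_sub_le_breadth_of_mem {q : AddMonoidAlgebra ℤ ℤ} {u v : ℤ} (hu : u ∈ q.coeff.support)
    (hv : v ∈ q.coeff.support) : |u - v| ≤ breadth q :=
  abs_sub_le_iff.mpr ⟨le_breadth_of_mem hu hv, le_breadth_of_mem hv hu⟩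

lemma exists_mem_support_ybreadth_eq {p : AddMonoidAlgebra ℤ (ℤ × ℤ)} (hp : p ≠ 0) :
    ∃ a ∈ p.coeff.support, ∃ b ∈ p.coeff.support, ybreadth p = b.2 - a.2 := by
  have hne : (p.coeff.support.image Prod.snd).Nonempty :=
    (Finsupp.support_nonempty_iff.mpr (AddMonoidAlgebra.coeff_eq_zero.not.mpr hp)).image _
  obtain ⟨a, ha, ha2⟩ := Finset.mem_image.mp (Finset.min'_mem _ hne)
  obtain ⟨b, hb, hb2⟩ := Finset.mem_image.mp (Finset.max'_mem _ hne)
  refine ⟨a, ha, b, hb, ?_⟩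
  rw [ybreadth, ymax, ymin, ← Finset.coe_max' hne, ← Finset.coe_min' hne, WithBot.unbotD_coe,
    WithTop.untopD_coe, ha2, hb2]

lemma exists_abs_fst_sub_le (s : Finset (ℤ × ℤ)) :
    ∃ W : ℤ, ∀ a ∈ s, ∀ b ∈ s, |a.1 - b.1| ≤ W := by
  obtain ⟨M, hM⟩ := (s.image fun a => |a.1|).bddAbove
  refine ⟨2 * M, fun a ha b hb => ?_⟩
  have hMa : |a.1| ≤ M := hM (Finset.mem_image_of_mem _ ha)
  have hMb : |b.1| ≤ M := hM (Finset.mem_image_of_mem _ hb)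
  calc |a.1 - b.1| ≤ |a.1| + |b.1| := abs_sub _ _
    _ ≤ 2 * M := by linarith

section specPow

variable {p : AddMonoidAlgebra ℤ (ℤ × ℤ)} {c W : ℤ}

/-- Two monomials with the same `t`-exponent have `x`-exponents differing by a multiple of `c`,
so they coincide as soon as `x`-exponents differ by less than `|c|`. -/
lemma injOn_specExponent (hW : ∀ a ∈ p.coeff.support, ∀ b ∈ p.coeff.support, |a.1 - b.1| ≤ W)
    (hc : W < |c|) : Set.InjOn (specExponent c) p.coeff.support := by
  intro a ha b hb hab
  have hsub : a.1 - b.1 = c * (b.2 - a.2) := by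
    simp only [specExponent] at hab
    linarith
  have h2 : a.2 = b.2 := by
    by_contra hne
    have : |c| ≤ |a.1 - b.1| := by
      rw [hsub, abs_mul]
      exact le_mul_of_one_le_right (abs_nonneg c) (Int.one_le_abs (sub_ne_zero.mpr (Ne.symm hne)))
    linarith [hW a ha b hb]
  exact Prod.ext (by rw [h2, sub_self, mul_zero] at hsub; linarith) h2

lemma support_specPow (hinj : Set.InjOn (specExponent c) p.coeff.support) :
    (specPow c p).coeff.support = p.coeff.support.image (specExponent c) := by
  classical
  exact Finsupp.mapDomain_support_of_injOn _ hinj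

theorem abs_mul_ybreadth_sub_le_breadth_specPow (hp : p ≠ 0)
    (hW : ∀ a ∈ p.coeff.support, ∀ b ∈ p.coeff.support, |a.1 - b.1| ≤ W) (hc : W < |c|) :
    |c| * ybreadth p - W ≤ breadth (specPow c p) := by
  classical
  obtain ⟨a, ha, b, hb, hyb⟩ := exists_mem_support_ybreadth_eq hp
  have hsupp := support_specPow (injOn_specExponent hW hc)
  have hbr : |specExponent c b - specExponent c a| ≤ breadth (specPow c p) :=
    abs_sub_le_breadth_of_mem (hsupp ▸ Finset.mem_image_of_mem _ hb)
      (hsupp ▸ Finset.mem_image_of_mem _ ha)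
  have hexp : specExponent c b - specExponent c a = (b.1 - a.1) + c * ybreadth p := by
    rw [hyb, specExponent, specExponent]; ring
  calc |c| * ybreadth p - W ≤ |c * ybreadth p| - |b.1 - a.1| := by
        rw [abs_mul]
        linarith [hW b hb a ha, mul_le_mul_of_nonneg_left (le_abs_self (ybreadth p)) (abs_nonneg c)]
    _ ≤ |(b.1 - a.1) + c * ybreadth p| := by
        have := abs_sub_abs_le_abs_sub (c * ybreadth p) (-(b.1 - a.1))
        rwa [abs_neg, sub_neg_eq_add, add_comm] at this
    _ ≤ breadth (specPow c p) := hexp ▸ hbr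

end specPow

/-- The core inequality in the proof of Proposition 1.9 of the paper: if `p` is a
nonzero two-variable Laurent polynomial, `ω ≥ 1`, and there are a real constant `D`
and infinitely many positive integers `n` for which `p(t, t^{−nω})` is nonzero with
breadth at most `n·ω² + D`, then the `y`-breadth of `p` is at most `ω`. -/
theorem ybreadth_le_of_infinitely_many_small_breadth
    (p : AddMonoidAlgebra ℤ (ℤ × ℤ)) (hp : p ≠ 0) (ω : ℤ) (hω : 1 ≤ ω) (D : ℝ)
    (h : {n : ℤ | 0 < n ∧ specPow (-(n * ω)) p ≠ 0 ∧
        (breadth (specPow (-(n * ω)) p) : ℝ) ≤ (n : ℝ) * (ω : ℝ) ^ 2 + D}.Infinite) :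
    ybreadth p ≤ ω := by
  by_contra! hlt
  obtain ⟨W, hW⟩ := exists_abs_fst_sub_le p.coeff.support
  refine h ((Set.finite_Icc 1 (W + max 0 ⌈D⌉)).subset fun n ⟨hn, _, hbd⟩ => ⟨hn, ?_⟩)
  by_contra! hn_large
  have hnω : n ≤ n * ω := le_mul_of_one_le_right hn.le hω
  have hc : |-(n * ω)| = n * ω := by rw [abs_neg, abs_of_pos (by positivity)]
  have hlow := abs_mul_ybreadth_sub_le_breadth_specPow hp hW
    (c := -(n * ω)) (by rw [hc]; linarith [le_max_left 0 ⌈D⌉])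
  rw [hc] at hlow
  have hℓ : n * ω * (ω + 1) ≤ n * ω * ybreadth p :=
    mul_le_mul_of_nonneg_left hlt (by positivity)
  have hlowR : ((n * ω * ω + n - W : ℤ) : ℝ) ≤ breadth (specPow (-(n * ω)) p) := by
    exact_mod_cast (by linarith : n * ω * ω + n - W ≤ breadth (specPow (-(n * ω)) p))
  have hD : D + W < n := by
    have : ((W + max 0 ⌈D⌉ : ℤ) : ℝ) < n := by exact_mod_cast hn_large
    push_cast at this
    linarith [Int.le_ceil D, le_max_right (0 : ℝ) (⌈D⌉ : ℝ)]
  push_cast at hlowR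
  nlinarith
end
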